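/- arXiv:2105.05761 — 2 statements merged into one kernel-verified Lean document; each statement's English description precedes it below -/
import Mathlib

section
/- Let (X, d) be a pseudometric space, H a real inner product space with norm ‖·‖, P a nonempty finite subset of X, q ∈ X, and f : X → H. Let D, w, λ, β, c > 0 and 0 ≤ p ≤ 1 be real numbers with β·c > 2·w. Assume: (i) ‖f(x) − f(y)‖ ≤ D·d(x, y) for all x, y ∈ X; (ii) Σ_{x,y ∈ P} ‖f(x) − f(y)‖² ≥ Σ_{x,y ∈ P} d(x, y)² (sums over ordered pairs); (iii) for every x ∈ P, the number of points y ∈ P with d(x, y) ≤ λ·D is at most p·|P|; (iv) d(x, y) ≤ β·c for all x, y ∈ P. Let α = |{x ∈ P : ‖f(x) − f(q)‖ ≤ w·D}| / |P|. Then α² ≤ (β²·c² − (1 − p)·λ²) / (β²·c² − 4·w²). -/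
/-!
Count ordered pairs of points of `P`. By the small-ball condition each row of the distance
matrix has at least `(1 - p)|P|` entries exceeding `λD`, so `∑ d² ≥ (1 - p)|P|²λ²D²`. On the
other side, pairs of points that `f` sends within `wD` of `f q` are at most `2wD` apart in `H`,
and all other pairs at most `Dβc` (Lipschitz bound and diameter). Feeding both bounds into the
average-embedding inequality and dividing by `D²` gives
`(1 - p)λ² ≤ 4w²α² + β²c²(1 - α²)`, which rearranges to the claim since `β²c² > 4w²`.
-/

open Finset

section

variable {ι : Type*}

lemma one_sub_mul_card_mul_sq_le_sum_sq (s : Finset ι) (g : ι → ℝ) {p r : ℝ} (hr : 0 ≤ r)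
    [DecidablePred fun i => g i ≤ r] (hcard : (#(s.filter fun i => g i ≤ r) : ℝ) ≤ p * #s) :
    (1 - p) * #s * r ^ 2 ≤ ∑ i ∈ s, g i ^ 2 := by
  set far := s.filter fun i => ¬g i ≤ r
  have hsplit : (#(s.filter fun i => g i ≤ r) : ℝ) + #far = #s := by
    exact_mod_cast card_filter_add_card_filter_not _
  calc (1 - p) * #s * r ^ 2 ≤ #far * r ^ 2 := by gcongr; linarith
    _ = ∑ _i ∈ far, r ^ 2 := by rw [sum_const, nsmul_eq_mul]
    _ ≤ ∑ i ∈ far, g i ^ 2 :=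
        sum_le_sum fun i hi => pow_le_pow_left₀ hr (not_le.1 (mem_filter.1 hi).2).le 2
    _ ≤ ∑ i ∈ s, g i ^ 2 :=
        sum_le_sum_of_subset_of_nonneg (filter_subset _ _) fun _ _ _ => sq_nonneg _

lemma one_sub_mul_card_sq_mul_sq_le_sum_sum_sq (s : Finset ι) (g : ι → ι → ℝ) {p r : ℝ}
    (hr : 0 ≤ r) [∀ i, DecidablePred fun j => g i j ≤ r]
    (hcard : ∀ i ∈ s, (#(s.filter fun j => g i j ≤ r) : ℝ) ≤ p * #s) :
    (1 - p) * #s ^ 2 * r ^ 2 ≤ ∑ i ∈ s, ∑ j ∈ s, g i j ^ 2 :=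
  calc (1 - p) * #s ^ 2 * r ^ 2 = ∑ _i ∈ s, (1 - p) * #s * r ^ 2 := by
        rw [sum_const, nsmul_eq_mul]; ring
    _ ≤ ∑ i ∈ s, ∑ j ∈ s, g i j ^ 2 :=
        sum_le_sum fun i hi => one_sub_mul_card_mul_sq_le_sum_sq s (g i) hr (hcard i hi)

lemma sum_sum_le_of_le_on_subset {s t : Finset ι} (hts : t ⊆ s) (F : ι → ι → ℝ) {a b : ℝ}
    (hta : ∀ i ∈ t, ∀ j ∈ t, F i j ≤ a) (hsb : ∀ i ∈ s, ∀ j ∈ s, F i j ≤ b) :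
    ∑ i ∈ s, ∑ j ∈ s, F i j ≤ #t ^ 2 * a + (#s ^ 2 - #t ^ 2) * b := by
  classical
  have hsub : t ×ˢ t ⊆ s ×ˢ s := product_subset_product hts hts
  have hinner : ∑ z ∈ t ×ˢ t, F z.1 z.2 ≤ #t ^ 2 * a := by
    simpa [sq, mul_comm] using sum_le_card_nsmul (t ×ˢ t) _ a fun z hz =>
      hta _ (mem_product.1 hz).1 _ (mem_product.1 hz).2
  have houter : ∑ z ∈ s ×ˢ s \ t ×ˢ t, F z.1 z.2 ≤ (#s ^ 2 - #t ^ 2) * b := by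
    have hcard : (#(s ×ˢ s \ t ×ˢ t) : ℝ) = #s ^ 2 - #t ^ 2 := by
      rw [card_sdiff_of_subset hsub, Nat.cast_sub (card_le_card hsub)]
      simp only [card_product]
      push_cast
      ring
    rw [← hcard, ← nsmul_eq_mul]
    exact sum_le_card_nsmul _ _ b fun z hz =>
      have hz := mem_product.1 (mem_sdiff.1 hz).1
      hsb _ hz.1 _ hz.2
  rw [← sum_product', ← sum_sdiff hsub]
  linarith

end

open scoped Classical in
theorem stmt_5_general {X : Type*} [PseudoMetricSpace X] {H : Type*} [NormedAddCommGroup H]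
    (P : Finset X) (hP : P.Nonempty) (q : X) (f : X → H)
    (D w lam β c p : ℝ) (hD : 0 < D) (hw : 0 < w) (hlam : 0 < lam)
    (hβcw : 2 * w < β * c)
    (hLip : ∀ x y : X, ‖f x - f y‖ ≤ D * dist x y)
    (hAvg : ∑ x ∈ P, ∑ y ∈ P, dist x y ^ 2 ≤ ∑ x ∈ P, ∑ y ∈ P, ‖f x - f y‖ ^ 2)
    (hball : ∀ x ∈ P, ((P.filter fun y => dist x y ≤ lam * D).card : ℝ) ≤ p * P.card)
    (hdiam : ∀ x ∈ P, ∀ y ∈ P, dist x y ≤ β * c)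
    (α : ℝ) (hα : α = ((P.filter fun x => ‖f x - f q‖ ≤ w * D).card : ℝ) / P.card) :
    α ^ 2 ≤ (β ^ 2 * c ^ 2 - (1 - p) * lam ^ 2) / (β ^ 2 * c ^ 2 - 4 * w ^ 2) := by
  set S := P.filter fun x => ‖f x - f q‖ ≤ w * D
  have hn : (0 : ℝ) < #P := by exact_mod_cast hP.card_pos
  have hlow := one_sub_mul_card_sq_mul_sq_le_sum_sum_sq P dist (by positivity) hball
  have hnear : ∀ x ∈ S, ∀ y ∈ S, ‖f x - f y‖ ^ 2 ≤ (2 * w * D) ^ 2 := by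
    intro x hx y hy
    have hxy := norm_sub_le_norm_sub_add_norm_sub (f x) (f q) (f y)
    rw [norm_sub_rev (f q)] at hxy
    have := add_le_add (mem_filter.1 hx).2 (mem_filter.1 hy).2
    exact pow_le_pow_left₀ (norm_nonneg _) (by linarith) 2
  have hfar : ∀ x ∈ P, ∀ y ∈ P, ‖f x - f y‖ ^ 2 ≤ (D * (β * c)) ^ 2 := fun x hx y hy =>
    pow_le_pow_left₀ (norm_nonneg _)
      ((hLip x y).trans (mul_le_mul_of_nonneg_left (hdiam x hx y hy) hD.le)) 2
  have hup := sum_sum_le_of_le_on_subset (filter_subset _ P) _ hnear hfar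
  have hD2 : ((1 - p) * lam ^ 2 * #P ^ 2) * D ^ 2
      ≤ (4 * w ^ 2 * #S ^ 2 + β ^ 2 * c ^ 2 * (#P ^ 2 - #S ^ 2)) * D ^ 2 := by
    linarith
  have hkey := le_of_mul_le_mul_right hD2 (by positivity)
  have hden : 0 < β ^ 2 * c ^ 2 - 4 * w ^ 2 := by nlinarith
  rw [hα, div_pow, div_le_div_iff₀ (by positivity) hden]
  linarith

open scoped Classical in
/-- Quadratic bound: under the average-embedding, small-ball and diameter hypotheses,
with `β·c > 2·w`, the fraction `α` of points of `P` mapped within distance `w·D` of `f(q)`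
satisfies `α² ≤ (β²·c² − (1 − p)·λ²)/(β²·c² − 4·w²)`. -/
theorem stmt_5 {X : Type*} [PseudoMetricSpace X] {H : Type*} [NormedAddCommGroup H]
    [InnerProductSpace ℝ H] (P : Finset X) (hP : P.Nonempty) (q : X) (f : X → H)
    (D w lam β c p : ℝ) (hD : 0 < D) (hw : 0 < w) (hlam : 0 < lam) (hβ : 0 < β)
    (hc : 0 < c) (hp0 : 0 ≤ p) (hp1 : p ≤ 1) (hβcw : 2 * w < β * c)
    (hLip : ∀ x y : X, ‖f x - f y‖ ≤ D * dist x y)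
    (hAvg : ∑ x ∈ P, ∑ y ∈ P, dist x y ^ 2 ≤ ∑ x ∈ P, ∑ y ∈ P, ‖f x - f y‖ ^ 2)
    (hball : ∀ x ∈ P, ((P.filter fun y => dist x y ≤ lam * D).card : ℝ) ≤ p * P.card)
    (hdiam : ∀ x ∈ P, ∀ y ∈ P, dist x y ≤ β * c)
    (α : ℝ) (hα : α = ((P.filter fun x => ‖f x - f q‖ ≤ w * D).card : ℝ) / P.card) :
    α ^ 2 ≤ (β ^ 2 * c ^ 2 - (1 - p) * lam ^ 2) / (β ^ 2 * c ^ 2 - 4 * w ^ 2) :=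
  stmt_5_general P hP q f D w lam β c p hD hw hlam hβcw hLip hAvg hball hdiam α hα
end

section
/- Let p ≥ 2 be a real number and n a positive integer. For x ∈ ℝⁿ define h(x) ∈ ℝⁿ coordinatewise by h(x)_i = sign(x_i)·|x_i|^{p/2}, and define f : ℝⁿ → ℝⁿ by f(x) = (‖x‖_p / ‖h(x)‖₂)·h(x) for x ≠ 0 and f(0) = 0. Then, viewing the domain with the ℓ_p norm and the codomain with the Euclidean (ℓ₂) norm, f is (p+1)-Lipschitz: for all x, y ∈ ℝⁿ, ‖f(x) − f(y)‖₂ ≤ (p+1)·‖x − y‖_p. -/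
open Finset

/-- The ℓ_p norm on ℝⁿ: `(∑ i, |x i| ^ p) ^ (1/p)`. -/
noncomputable def lpNorm (p : ℝ) {n : ℕ} (x : Fin n → ℝ) : ℝ :=
  (∑ i, |x i| ^ p) ^ (1 / p)

/-- The Euclidean (ℓ₂) norm on ℝⁿ. -/
noncomputable def l2Norm {n : ℕ} (x : Fin n → ℝ) : ℝ :=
  Real.sqrt (∑ i, (x i) ^ 2)

/-- The Mazur map from ℓ_p to ℓ₂: `h(x)_i = sign(x_i)·|x_i|^(p/2)`. -/
noncomputable def mazur (p : ℝ) {n : ℕ} (x : Fin n → ℝ) : Fin n → ℝ :=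
  fun i => Real.sign (x i) * |x i| ^ (p / 2)

/-- The rescaled Mazur map: `f(x) = (‖x‖_p/‖h(x)‖₂)·h(x)` for `x ≠ 0`, and `f(0) = 0`. -/
noncomputable def rescaledMazur (p : ℝ) {n : ℕ} (x : Fin n → ℝ) : Fin n → ℝ :=
  if x = 0 then 0 else (lpNorm p x / l2Norm (mazur p x)) • mazur p x

/-!
Put `r = p / 2`, so that `f x = ‖x‖_p ^ (1 - r) • h x`. For `‖y‖_p ≤ ‖x‖_p`,
`f x - f y = ‖x‖_p ^ (1 - r) • (h x - h y) + (‖x‖_p ^ (1 - r) - ‖y‖_p ^ (1 - r)) • h y`.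

The Mazur map satisfies `‖h x - h y‖₂ ≤ r · max (‖x‖_p, ‖y‖_p) ^ (r - 1) · ‖x - y‖_p`: along the
segment `z = y + t (x - y)` the derivative of `h z` is `(r |z_i| ^ (r - 1) (x_i - y_i))_i`, whose
ℓ₂-norm is at most `r ‖z‖_p ^ (r - 1) ‖x - y‖_p` by Hölder's inequality with exponents
`p / (p - 2)` and `p / 2`, and `‖z‖_p ≤ max (‖x‖_p, ‖y‖_p)` by convexity; the mean value
theorem concludes. Hence the first term is at most `r ‖x - y‖_p`.

As `‖h y‖₂ = ‖y‖_p ^ r`, the second term is `b - a (b / a) ^ r` with `a = ‖x‖_p`, `b = ‖y‖_p`,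
and Bernoulli's inequality `(b / a) ^ r ≥ 1 + r (b / a - 1)` bounds it by
`(r - 1) (a - b) ≤ (r - 1) ‖x - y‖_p`. So `f` is even `(p - 1)`-Lipschitz.
-/

lemma sign_mul_abs_rpow_eq (q s : ℝ) : Real.sign s * |s| ^ q = s * |s| ^ (q - 1) := by
  rcases eq_or_ne s 0 with rfl | hs
  · simp
  · rw [Real.rpow_sub_one (abs_ne_zero.2 hs)]
    rcases hs.lt_or_gt with hs | hs
    · rw [Real.sign_of_neg hs, abs_of_neg hs]; field_simp
    · rw [Real.sign_of_pos hs, abs_of_pos hs]; field_simp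

lemma hasDerivAt_sign_mul_abs_rpow {q : ℝ} (hq : 1 ≤ q) (a : ℝ) :
    HasDerivAt (fun s => Real.sign s * |s| ^ q) (q * |a| ^ (q - 1)) a := by
  simp only [sign_mul_abs_rpow_eq q]
  rcases eq_or_ne a 0 with rfl | ha
  · have hlim : q * |(0 : ℝ)| ^ (q - 1) = |(0 : ℝ)| ^ (q - 1) := by
      rcases hq.eq_or_lt with rfl | hq
      · simp
      · simp [Real.zero_rpow (sub_ne_zero.2 hq.ne')]
    rw [hlim, hasDerivAt_iff_tendsto_slope]
    have hcont : ContinuousAt (fun s : ℝ => |s| ^ (q - 1)) 0 :=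
      (Real.continuousAt_rpow_const _ _ (Or.inr (by linarith))).comp continuous_abs.continuousAt
    refine (hcont.tendsto.mono_left nhdsWithin_le_nhds).congr' ?_
    filter_upwards [self_mem_nhdsWithin] with s (hs : s ≠ 0)
    rw [slope_def_field, zero_mul, sub_zero, sub_zero, mul_div_cancel_left₀ _ hs]
  · refine ((hasDerivAt_id a).mul
      ((hasDerivAt_abs ha).rpow_const (p := q - 1) (Or.inl (abs_ne_zero.2 ha)))).congr_deriv ?_
    have hpow : |a| * |a| ^ (q - 1 - 1) = |a| ^ (q - 1) := by
      rw [mul_comm, ← Real.rpow_add_one (abs_ne_zero.2 ha)]; ring_nf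
    rw [id_eq]
    linear_combination (q - 1) * hpow + (q - 1) * |a| ^ (q - 1 - 1) * self_mul_sign a

lemma abs_rpow_one_sub_sub_mul_rpow_le {a b r : ℝ} (hb : 0 ≤ b) (hba : b ≤ a) (hr : 1 ≤ r) :
    |a ^ (1 - r) - b ^ (1 - r)| * b ^ r ≤ (r - 1) * (a - b) := by
  rcases hb.eq_or_lt with rfl | hb
  · rw [Real.zero_rpow (x := r) (by linarith), mul_zero]
    nlinarith
  have ha : 0 < a := hb.trans_le hba
  have hmono : a ^ (1 - r) ≤ b ^ (1 - r) := Real.rpow_le_rpow_of_nonpos hb hba (by linarith)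
  have hb_cancel : b ^ (1 - r) * b ^ r = b := by
    rw [← Real.rpow_add hb]; simp
  have hratio : a ^ (1 - r) * b ^ r = a * (b / a) ^ r := by
    rw [Real.div_rpow hb.le ha.le, Real.rpow_sub ha, Real.rpow_one]
    field_simp
  have hbernoulli : 1 + r * (b / a - 1) ≤ (b / a) ^ r := by
    simpa using one_add_mul_self_le_rpow_one_add (s := b / a - 1)
      (by linarith [div_nonneg hb.le ha.le]) hr
  have htangent : a + r * (b - a) ≤ a * (b / a) ^ r := by
    have := mul_le_mul_of_nonneg_left hbernoulli ha.le
    rwa [mul_add, mul_one, mul_left_comm, mul_sub, mul_div_cancel₀ _ ha.ne', mul_one] at this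
  rw [abs_of_nonpos (by linarith), neg_sub, sub_mul, hb_cancel, hratio]
  linarith

lemma sum_abs_rpow_mul_sq_le {ι : Type*} (s : Finset ι) {p : ℝ} (hp : 2 ≤ p) (z w : ι → ℝ) :
    ∑ i ∈ s, |z i| ^ (p - 2) * w i ^ 2 ≤
      (∑ i ∈ s, |z i| ^ p) ^ ((p - 2) / p) * (∑ i ∈ s, |w i| ^ p) ^ (2 / p) := by
  rcases hp.eq_or_lt with rfl | hp
  · norm_num
  have hpq : (p / (p - 2)).HolderConjugate (p / 2) := by
    rw [Real.holderConjugate_iff]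
    constructor
    · rw [lt_div_iff₀ (by linarith)]; linarith
    · field_simp; ring
  convert Real.inner_le_Lp_mul_Lq_of_nonneg s hpq (f := fun i => |z i| ^ (p - 2))
    (g := fun i => w i ^ 2) (fun i _ => by positivity) (fun i _ => by positivity) using 3
  · refine sum_congr rfl fun i _ => ?_
    rw [← Real.rpow_mul (abs_nonneg _)]
    field_simp
  · field_simp
  · refine sum_congr rfl fun i _ => ?_
    rw [← sq_abs, ← Real.rpow_natCast, ← Real.rpow_mul (abs_nonneg _)]
    ring_nf
  · field_simp

section Norms

variable {n : ℕ}

lemma lpNorm_nonneg (p : ℝ) (x : Fin n → ℝ) : 0 ≤ lpNorm p x := by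
  unfold lpNorm; positivity

lemma lpNorm_pos (p : ℝ) {x : Fin n → ℝ} (hx : x ≠ 0) : 0 < lpNorm p x := by
  obtain ⟨i, hi⟩ := Function.ne_iff.1 hx
  have hxi : 0 < |x i| := abs_pos.2 hi
  exact Real.rpow_pos_of_pos (sum_pos' (fun j _ => by positivity) ⟨i, mem_univ i, by positivity⟩) _

lemma lpNorm_rpow {p : ℝ} (hp : 0 < p) (x : Fin n → ℝ) : lpNorm p x ^ p = ∑ i, |x i| ^ p := by
  rw [lpNorm, ← Real.rpow_mul (by positivity), one_div_mul_cancel hp.ne', Real.rpow_one]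

lemma lpNorm_add_le {p : ℝ} (hp : 1 ≤ p) (x y : Fin n → ℝ) :
    lpNorm p (x + y) ≤ lpNorm p x + lpNorm p y :=
  Real.Lp_add_le univ x y hp

lemma lpNorm_smul {p : ℝ} (hp : 0 < p) (c : ℝ) (x : Fin n → ℝ) :
    lpNorm p (c • x) = |c| * lpNorm p x := by
  simp only [lpNorm, Pi.smul_apply, smul_eq_mul, abs_mul,
    Real.mul_rpow (abs_nonneg c) (abs_nonneg _), ← mul_sum]
  rw [Real.mul_rpow (by positivity) (by positivity), ← Real.rpow_mul (abs_nonneg c),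
    mul_one_div_cancel hp.ne', Real.rpow_one]

lemma lpNorm_sub_comm (p : ℝ) (x y : Fin n → ℝ) : lpNorm p (x - y) = lpNorm p (y - x) := by
  simp only [lpNorm, Pi.sub_apply, abs_sub_comm]

lemma lpNorm_sub_lpNorm_le {p : ℝ} (hp : 1 ≤ p) (x y : Fin n → ℝ) :
    lpNorm p x - lpNorm p y ≤ lpNorm p (x - y) := by
  have := lpNorm_add_le hp y (x - y)
  rw [add_sub_cancel] at this
  linarith

lemma lpNorm_add_smul_sub_le_max {p : ℝ} (hp : 1 ≤ p) (x y : Fin n → ℝ) {t : ℝ} (ht₀ : 0 ≤ t)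
    (ht₁ : t ≤ 1) : lpNorm p (y + t • (x - y)) ≤ max (lpNorm p x) (lpNorm p y) := by
  have hconv : y + t • (x - y) = (1 - t) • y + t • x := by module
  rw [hconv]
  refine (lpNorm_add_le hp _ _).trans ?_
  rw [lpNorm_smul (by linarith), lpNorm_smul (by linarith), abs_of_nonneg (by linarith),
    abs_of_nonneg ht₀]
  nlinarith [le_max_left (lpNorm p x) (lpNorm p y), le_max_right (lpNorm p x) (lpNorm p y)]

lemma l2Norm_eq_norm (v : Fin n → ℝ) : l2Norm v = ‖(EuclideanSpace.equiv (Fin n) ℝ).symm v‖ := by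
  simp [l2Norm, EuclideanSpace.norm_eq]

lemma l2Norm_add_le (v w : Fin n → ℝ) : l2Norm (v + w) ≤ l2Norm v + l2Norm w := by
  simpa only [l2Norm_eq_norm, map_add] using norm_add_le _ _

lemma l2Norm_smul (c : ℝ) (v : Fin n → ℝ) : l2Norm (c • v) = |c| * l2Norm v := by
  simp only [l2Norm_eq_norm, map_smul, norm_smul, Real.norm_eq_abs]

lemma l2Norm_sub_comm (v w : Fin n → ℝ) : l2Norm (v - w) = l2Norm (w - v) := by
  simp only [l2Norm_eq_norm, map_sub, norm_sub_rev]

end Norms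

section Mazur

variable {n : ℕ}

lemma l2Norm_mazur {p : ℝ} (hp : 0 < p) (x : Fin n → ℝ) :
    l2Norm (mazur p x) = lpNorm p x ^ (p / 2) := by
  have hsq : ∀ s : ℝ, (Real.sign s * |s| ^ (p / 2)) ^ 2 = |s| ^ p := fun s => by
    rcases eq_or_ne s 0 with rfl | hs
    · simp [Real.zero_rpow hp.ne']
    · rw [mul_pow, ← Real.rpow_natCast (|s| ^ _), ← Real.rpow_mul (abs_nonneg s)]
      rcases hs.lt_or_gt with hs | hs
      · simp [Real.sign_of_neg hs]
      · simp [Real.sign_of_pos hs]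
  simp only [l2Norm, mazur, hsq]
  rw [Real.sqrt_eq_rpow, ← lpNorm_rpow hp, ← Real.rpow_mul (lpNorm_nonneg p x)]
  ring_nf

lemma hasDerivAt_mazur_add_smul {p : ℝ} (hp : 2 ≤ p) (z w : Fin n → ℝ) (t : ℝ) :
    HasDerivAt (fun t => mazur p (z + t • w))
      (fun i => p / 2 * |(z + t • w) i| ^ (p / 2 - 1) * w i) t := by
  rw [hasDerivAt_pi]
  intro i
  have hline : HasDerivAt (fun t => z i + t * w i) (w i) t := by
    simpa using ((hasDerivAt_id t).mul_const (w i)).const_add (z i)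
  exact (hasDerivAt_sign_mul_abs_rpow (by linarith) _).comp t hline

lemma l2Norm_mul_abs_rpow_le {p : ℝ} (hp : 2 ≤ p) (z w : Fin n → ℝ) :
    l2Norm (fun i => p / 2 * |z i| ^ (p / 2 - 1) * w i) ≤
      p / 2 * lpNorm p z ^ (p / 2 - 1) * lpNorm p w := by
  have hp₀ : 0 < p := by linarith
  have hz := lpNorm_nonneg p z
  have hw := lpNorm_nonneg p w
  rw [l2Norm, Real.sqrt_le_left (by positivity)]
  have hsq : ∀ i, (p / 2 * |z i| ^ (p / 2 - 1) * w i) ^ 2 =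
      (p / 2) ^ 2 * (|z i| ^ (p - 2) * w i ^ 2) := by
    intro i
    rw [mul_pow, mul_pow, ← Real.rpow_natCast (|z i| ^ _), ← Real.rpow_mul (abs_nonneg _)]
    ring_nf
  have hzpow : (lpNorm p z ^ (p / 2 - 1)) ^ 2 = (∑ i, |z i| ^ p) ^ ((p - 2) / p) := by
    rw [← lpNorm_rpow hp₀, ← Real.rpow_natCast, ← Real.rpow_mul hz, ← Real.rpow_mul hz]
    field_simp
    ring_nf
  have hwpow : lpNorm p w ^ 2 = (∑ i, |w i| ^ p) ^ (2 / p) := by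
    rw [← lpNorm_rpow hp₀, ← Real.rpow_mul hw, mul_div_cancel₀ _ hp₀.ne', Real.rpow_two]
  calc ∑ i, (p / 2 * |z i| ^ (p / 2 - 1) * w i) ^ 2
      = (p / 2) ^ 2 * ∑ i, |z i| ^ (p - 2) * w i ^ 2 := by simp only [hsq, ← mul_sum]
    _ ≤ (p / 2) ^ 2 * ((∑ i, |z i| ^ p) ^ ((p - 2) / p) * (∑ i, |w i| ^ p) ^ (2 / p)) := by
        gcongr; exact sum_abs_rpow_mul_sq_le univ hp z w
    _ = _ := by rw [← hzpow, ← hwpow]; ring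

lemma l2Norm_mazur_sub_le {p : ℝ} (hp : 2 ≤ p) (x y : Fin n → ℝ) :
    l2Norm (mazur p x - mazur p y) ≤
      p / 2 * max (lpNorm p x) (lpNorm p y) ^ (p / 2 - 1) * lpNorm p (x - y) := by
  set C := p / 2 * max (lpNorm p x) (lpNorm p y) ^ (p / 2 - 1) * lpNorm p (x - y) with hC
  have hbound : ∀ t ∈ Set.Ico (0 : ℝ) 1,
      l2Norm (fun i => p / 2 * |(y + t • (x - y)) i| ^ (p / 2 - 1) * (x - y) i) ≤ C := by
    intro t ht
    refine (l2Norm_mul_abs_rpow_le hp _ _).trans ?_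
    have hz := lpNorm_nonneg p (y + t • (x - y))
    have hd := lpNorm_nonneg p (x - y)
    rw [hC]
    gcongr
    · linarith
    · exact lpNorm_add_smul_sub_le_max (by linarith) x y ht.1 ht.2.le
  have hmvt := norm_image_sub_le_of_norm_deriv_le_segment_01' (C := C)
    (fun t _ => ((EuclideanSpace.equiv (Fin n) ℝ).symm.hasFDerivAt.comp_hasDerivAt t
      (hasDerivAt_mazur_add_smul hp y (x - y) t)).hasDerivWithinAt)
    (fun t ht => (l2Norm_eq_norm _).symm.trans_le (hbound t ht))
  simpa [l2Norm_eq_norm] using hmvt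

end Mazur

section Rescaled

variable {p : ℝ} {n : ℕ} {x y : Fin n → ℝ}

lemma rescaledMazur_eq_rpow_smul (hp : 0 < p) :
    rescaledMazur p x = lpNorm p x ^ (1 - p / 2) • mazur p x := by
  rcases eq_or_ne x 0 with rfl | hx
  · ext i
    simp [rescaledMazur, mazur]
  · rw [rescaledMazur, if_neg hx, l2Norm_mazur hp, Real.rpow_sub (lpNorm_pos p hx), Real.rpow_one]

lemma rpow_one_sub_mul_l2Norm_mazur_sub_le (hp : 2 ≤ p) (hyx : lpNorm p y ≤ lpNorm p x) :
    lpNorm p x ^ (1 - p / 2) * l2Norm (mazur p x - mazur p y) ≤ p / 2 * lpNorm p (x - y) := by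
  have ha := lpNorm_nonneg p x
  -- not an equality: at `lpNorm p x = 0` the left side is `0 ^ (-s) * 0 ^ s ∈ {0, 1}`
  have hcancel : lpNorm p x ^ (1 - p / 2) * lpNorm p x ^ (p / 2 - 1) ≤ 1 := by
    rw [show 1 - p / 2 = -(p / 2 - 1) by ring, Real.rpow_neg ha]
    exact inv_mul_le_one
  have hmazur := l2Norm_mazur_sub_le hp x y
  rw [max_eq_left hyx] at hmazur
  calc lpNorm p x ^ (1 - p / 2) * l2Norm (mazur p x - mazur p y)
      ≤ lpNorm p x ^ (1 - p / 2) * (p / 2 * lpNorm p x ^ (p / 2 - 1) * lpNorm p (x - y)) := by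
        gcongr
    _ = lpNorm p x ^ (1 - p / 2) * lpNorm p x ^ (p / 2 - 1) * (p / 2 * lpNorm p (x - y)) := by
        ring
    _ ≤ p / 2 * lpNorm p (x - y) :=
        mul_le_of_le_one_left (mul_nonneg (by linarith) (lpNorm_nonneg p (x - y))) hcancel

lemma abs_rpow_one_sub_sub_mul_l2Norm_mazur_le (hp : 2 ≤ p) (hyx : lpNorm p y ≤ lpNorm p x) :
    |lpNorm p x ^ (1 - p / 2) - lpNorm p y ^ (1 - p / 2)| * l2Norm (mazur p y) ≤
      (p / 2 - 1) * lpNorm p (x - y) := by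
  rw [l2Norm_mazur (by linarith)]
  refine (abs_rpow_one_sub_sub_mul_rpow_le (lpNorm_nonneg p y) hyx (by linarith)).trans ?_
  gcongr
  · linarith
  · exact lpNorm_sub_lpNorm_le (by linarith) x y

end Rescaled

theorem stmt_11_general (p : ℝ) (hp : 2 ≤ p) (n : ℕ) (x y : Fin n → ℝ) :
    l2Norm (rescaledMazur p x - rescaledMazur p y) ≤ (p + 1) * lpNorm p (x - y) := by
  wlog hyx : lpNorm p y ≤ lpNorm p x generalizing x y
  · rw [l2Norm_sub_comm, lpNorm_sub_comm]
    exact this y x (le_of_not_ge hyx)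
  have hp₀ : 0 < p := by linarith
  calc l2Norm (rescaledMazur p x - rescaledMazur p y)
      = l2Norm (lpNorm p x ^ (1 - p / 2) • (mazur p x - mazur p y) +
          (lpNorm p x ^ (1 - p / 2) - lpNorm p y ^ (1 - p / 2)) • mazur p y) := by
        rw [rescaledMazur_eq_rpow_smul hp₀, rescaledMazur_eq_rpow_smul hp₀]
        congr 1
        module
    _ ≤ lpNorm p x ^ (1 - p / 2) * l2Norm (mazur p x - mazur p y) +
          |lpNorm p x ^ (1 - p / 2) - lpNorm p y ^ (1 - p / 2)| * l2Norm (mazur p y) := by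
        refine (l2Norm_add_le _ _).trans_eq ?_
        rw [l2Norm_smul, l2Norm_smul, abs_of_nonneg (Real.rpow_nonneg (lpNorm_nonneg p x) _)]
    _ ≤ p / 2 * lpNorm p (x - y) + (p / 2 - 1) * lpNorm p (x - y) :=
        add_le_add (rpow_one_sub_mul_l2Norm_mazur_sub_le hp hyx)
          (abs_rpow_one_sub_sub_mul_l2Norm_mazur_le hp hyx)
    _ ≤ (p + 1) * lpNorm p (x - y) := by nlinarith [lpNorm_nonneg p (x - y)]

/-- The rescaled Mazur map is `(p+1)`-Lipschitz from `ℓ_pⁿ` to `ℓ₂ⁿ`. -/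
theorem stmt_11 (p : ℝ) (hp : 2 ≤ p) (n : ℕ) (hn : 0 < n) (x y : Fin n → ℝ) :
    l2Norm (rescaledMazur p x - rescaledMazur p y) ≤ (p + 1) * lpNorm p (x - y) :=
  stmt_11_general p hp n x y
end
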